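/- arXiv:2410.03041 — 3 statements merged into one kernel-verified Lean document; each statement's English description precedes it below -/
import Mathlib

section
/- Fix i ∈ [n] := {1,…,n} and let 𝓘 denote the set of all discrete subintervals of [n]. For intervals I ⊆ J of [n] define C_{I,J} = 1 if I is contained in J without touching either endpoint of J, C_{I,J} = −1 if I = J, and C_{I,J} = 0 otherwise. Let g : 𝓘 → ℝ be any function assigning a real value g(I) to each interval I (representing the local fit (P^{(|I|,r)} y_I)_i), and let λ ≥ 0. Then max over intervals J containing i of [min over intervals I with i ∈ I ⊆ J of (g(I) + λC_{I,J}/|I|)] is at most min over intervals J containing i of [max over intervals I with i ∈ I ⊆ J of (g(I) − λC_{I,J}/|I|)]. -/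
/-!
Any two intervals `J₁ = [a₁, b₁]` and `J₂ = [a₂, b₂]` containing `i` share the subinterval
`I = J₁ ∩ J₂ = [max a₁ a₂, min b₁ b₂] ∋ i`. Each endpoint of `I` is an endpoint of `J₁` or of
`J₂`, so `C_{I,J₁} + C_{I,J₂} ≤ 0`; with `λ ≥ 0` this gives
`g(I) + λ C_{I,J₁}/|I| ≤ g(I) − λ C_{I,J₂}/|I|`. Hence every inner minimum is at most every
inner maximum, and the max-min is at most the min-max.
-/

/-- The penalty sign C_{I,J} for an interval I = [c,d] inside J = [a,b]:
−1 if I = J, +1 if I is strictly interior to J (touching neither endpoint), 0 otherwise. -/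
noncomputable def Cpen (a b c d : ℕ) : ℝ :=
  if c = a ∧ d = b then -1 else if a < c ∧ d < b then 1 else 0

lemma finite_setOf_subinterval_values (i a b : ℕ) (f : ℕ → ℕ → ℝ) :
    {w : ℝ | ∃ c d : ℕ, a ≤ c ∧ c ≤ i ∧ i ≤ d ∧ d ≤ b ∧ w = f c d}.Finite := by
  refine (((Set.finite_Icc a i).prod (Set.finite_Icc i b)).image
    (fun p : ℕ × ℕ => f p.1 p.2)).subset ?_
  rintro w ⟨c, d, hc, hci, hid, hd, rfl⟩
  exact ⟨(c, d), ⟨⟨hc, hci⟩, hid, hd⟩, rfl⟩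

/-- If the intersection is strictly interior to one interval, it must equal the other one. -/
lemma Cpen_add_Cpen_inter_nonpos (a₁ b₁ a₂ b₂ : ℕ) :
    Cpen a₁ b₁ (max a₁ a₂) (min b₁ b₂) + Cpen a₂ b₂ (max a₁ a₂) (min b₁ b₂) ≤ 0 := by
  simp only [Cpen]
  split_ifs <;> norm_num <;> omega

lemma penalized_add_le_penalized_sub (x lam p q len : ℝ) (hlam : 0 ≤ lam) (hlen : 0 < len)
    (hpq : p + q ≤ 0) :
    x + lam * p / len ≤ x - lam * q / len := by
  have : lam * (p + q) / len ≤ 0 :=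
    div_nonpos_of_nonpos_of_nonneg (mul_nonpos_of_nonneg_of_nonpos hlam hpq) hlen.le
  rw [mul_add, add_div] at this
  linarith

lemma sInf_penalized_le_sSup_penalized {i a₁ b₁ a₂ b₂ : ℕ} (g : ℕ → ℕ → ℝ) {lam : ℝ}
    (hlam : 0 ≤ lam) (hi₁ : a₁ ≤ i ∧ i ≤ b₁) (hi₂ : a₂ ≤ i ∧ i ≤ b₂) :
    sInf {w : ℝ | ∃ c d : ℕ, a₁ ≤ c ∧ c ≤ i ∧ i ≤ d ∧ d ≤ b₁ ∧
        w = g c d + lam * Cpen a₁ b₁ c d / ((d : ℝ) - c + 1)} ≤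
      sSup {w : ℝ | ∃ c d : ℕ, a₂ ≤ c ∧ c ≤ i ∧ i ≤ d ∧ d ≤ b₂ ∧
        w = g c d - lam * Cpen a₂ b₂ c d / ((d : ℝ) - c + 1)} := by
  set c := max a₁ a₂
  set d := min b₁ b₂
  have hci : c ≤ i := max_le hi₁.1 hi₂.1
  have hid : i ≤ d := le_min hi₁.2 hi₂.2
  have hlen : (0 : ℝ) < (d : ℝ) - c + 1 := by
    have : (c : ℝ) ≤ d := by exact_mod_cast hci.trans hid
    linarith
  calc _ ≤ g c d + lam * Cpen a₁ b₁ c d / ((d : ℝ) - c + 1) :=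
        csInf_le (finite_setOf_subinterval_values i a₁ b₁ _).bddBelow
          ⟨c, d, le_max_left _ _, hci, hid, min_le_left _ _, rfl⟩
    _ ≤ g c d - lam * Cpen a₂ b₂ c d / ((d : ℝ) - c + 1) :=
        penalized_add_le_penalized_sub _ _ _ _ _ hlam hlen (Cpen_add_Cpen_inter_nonpos ..)
    _ ≤ _ :=
        le_csSup (finite_setOf_subinterval_values i a₂ b₂ _).bddAbove
          ⟨c, d, le_max_right _ _, hci, hid, min_le_right _ _, rfl⟩

/-- Well-posedness of Minmax Trend Filtering: the max-min of penalized local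
fits g(I) + λC_{I,J}/|I| over intervals J ∋ i and subintervals I ∋ i is at most the
corresponding min-max of g(I) − λC_{I,J}/|I|. -/
theorem stmt13 (n i : ℕ) (h1 : 1 ≤ i) (h2 : i ≤ n) (g : ℕ → ℕ → ℝ)
    (lam : ℝ) (hlam : 0 ≤ lam) :
    sSup {v : ℝ | ∃ a b : ℕ, 1 ≤ a ∧ a ≤ i ∧ i ≤ b ∧ b ≤ n ∧
        v = sInf {w : ℝ | ∃ c d : ℕ, a ≤ c ∧ c ≤ i ∧ i ≤ d ∧ d ≤ b ∧
          w = g c d + lam * Cpen a b c d / ((d : ℝ) - c + 1)}} ≤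
    sInf {v : ℝ | ∃ a b : ℕ, 1 ≤ a ∧ a ≤ i ∧ i ≤ b ∧ b ≤ n ∧
        v = sSup {w : ℝ | ∃ c d : ℕ, a ≤ c ∧ c ≤ i ∧ i ≤ d ∧ d ≤ b ∧
          w = g c d - lam * Cpen a b c d / ((d : ℝ) - c + 1)}} := by
  refine csSup_le ⟨_, i, i, h1, le_rfl, le_rfl, h2, rfl⟩ ?_
  rintro v ⟨a₁, b₁, -, hai₁, hib₁, -, rfl⟩
  refine le_csInf ⟨_, i, i, h1, le_rfl, le_rfl, h2, rfl⟩ ?_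
  rintro w ⟨a₂, b₂, -, hai₂, hib₂, -, rfl⟩
  exact sInf_penalized_le_sSup_penalized g hlam ⟨hai₁, hib₁⟩ ⟨hai₂, hib₂⟩
end

section
/- Fix i ∈ [n], an interval J ⊆ [n] containing i, λ ≥ 0, M ≥ 0, and suppose i is in the interior of J in the sense that Dist(i,∂J) ≥ 1. Then max over subintervals I ⊆ J containing i of [M/√|I| − λ·C_{I,J}/|I|] ≤ M/√(Dist(i,∂J)) + M/√|J| + M²/(4λ) + λ/|J| whenever λ > 0, where C_{I,J} = 1 if I ⊂ J strictly (not touching the boundary of J), C_{I,J} = −1 if I = J, and C_{I,J} = 0 otherwise, and Dist(i,∂J) = min(i − j₁ + 1, j₂ − i + 1) for J = [j₁, j₂]. -/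
lemma div_sqrt_sub_div_le {M lam x : ℝ} (hlam : 0 < lam) (hx : 0 < x) :
    M / Real.sqrt x - lam / x ≤ M ^ 2 / (4 * lam) := by
  have hs : 0 < Real.sqrt x := Real.sqrt_pos.2 hx
  rw [show lam / x = lam / Real.sqrt x ^ 2 by rw [Real.sq_sqrt hx.le],
    div_sub_div _ _ hs.ne' (by positivity), div_le_div_iff₀ (by positivity) (by positivity)]
  nlinarith [sq_nonneg (M * Real.sqrt x - 2 * lam)]

lemma Cpen_cases {a b c d : ℕ} (hac : a ≤ c) (hdb : d ≤ b) :
    (c = a ∧ d = b ∧ Cpen a b c d = -1) ∨ (Cpen a b c d = 1) ∨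
      ((c = a ∨ d = b) ∧ Cpen a b c d = 0) := by
  unfold Cpen
  by_cases hJ : c = a ∧ d = b
  · exact Or.inl ⟨hJ.1, hJ.2, if_pos hJ⟩
  by_cases hint : a < c ∧ d < b
  · exact Or.inr (Or.inl (by rw [if_neg hJ, if_pos hint]))
  · exact Or.inr (Or.inr ⟨by omega, by rw [if_neg hJ, if_neg hint]⟩)

lemma dist_boundary_le_length {a b c d i : ℕ} (hci : c ≤ i) (hid : i ≤ d)
    (htouch : c = a ∨ d = b) :
    ((min (i - a + 1) (b - i + 1) : ℕ) : ℝ) ≤ (d : ℝ) - c + 1 := by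
  have h : min (i - a + 1) (b - i + 1) + c ≤ d + 1 := by omega
  have h' : ((min (i - a + 1) (b - i + 1) : ℕ) : ℝ) + c ≤ d + 1 := by exact_mod_cast h
  linarith

theorem stmt14_general (i j1 j2 : ℕ) (M lam : ℝ) (hM : 0 ≤ M) (hlam : 0 < lam) :
    ∀ c d : ℕ, j1 ≤ c → c ≤ i → i ≤ d → d ≤ j2 →
      M / Real.sqrt ((d : ℝ) - c + 1) - lam * Cpen j1 j2 c d / ((d : ℝ) - c + 1) ≤
        M / Real.sqrt ((min (i - j1 + 1) (j2 - i + 1) : ℕ) : ℝ)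
          + M / Real.sqrt ((j2 : ℝ) - j1 + 1)
          + M ^ 2 / (4 * lam) + lam / ((j2 : ℝ) - j1 + 1) := by
  intro c d hc hci hid hd
  have hI : (0 : ℝ) < (d : ℝ) - c + 1 := by
    have : (c : ℝ) ≤ d := by exact_mod_cast hci.trans hid
    linarith
  have hJ : (0 : ℝ) < (j2 : ℝ) - j1 + 1 := by
    have : (j1 : ℝ) ≤ j2 := by exact_mod_cast (hc.trans hci).trans (hid.trans hd)
    linarith
  have hDist : (0 : ℝ) < ((min (i - j1 + 1) (j2 - i + 1) : ℕ) : ℝ) :=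
    Nat.cast_pos.2 (by omega)
  have h1 : 0 ≤ M / Real.sqrt ((min (i - j1 + 1) (j2 - i + 1) : ℕ) : ℝ) := by positivity
  have h2 : 0 ≤ M / Real.sqrt ((j2 : ℝ) - j1 + 1) := by positivity
  have h3 : 0 ≤ M ^ 2 / (4 * lam) := by positivity
  have h4 : 0 ≤ lam / ((j2 : ℝ) - j1 + 1) := by positivity
  rcases Cpen_cases hc hd with ⟨rfl, rfl, hC⟩ | hC | ⟨htouch, hC⟩
  · rw [hC, mul_neg_one, neg_div, sub_neg_eq_add]
    linarith
  · rw [hC, mul_one]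
    linarith [div_sqrt_sub_div_le (M := M) hlam hI]
  · have hmono := div_le_div_of_nonneg_left hM (Real.sqrt_pos.2 hDist)
      (Real.sqrt_le_sqrt (dist_boundary_le_length hci hid htouch))
    rw [hC, mul_zero, zero_div, sub_zero]
    linarith

/-- For any subinterval I = [c,d] of J = [j₁,j₂] containing i,
M/√|I| − λ C_{I,J}/|I| ≤ M/√Dist(i,∂J) + M/√|J| + M²/(4λ) + λ/|J|. -/
theorem stmt14 (n i j1 j2 : ℕ) (M lam : ℝ) (hM : 0 ≤ M) (hlam : 0 < lam)
    (hj1 : 1 ≤ j1) (hij1 : j1 ≤ i) (hij2 : i ≤ j2) (hj2 : j2 ≤ n)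
    (hdist : 1 ≤ min (i - j1 + 1) (j2 - i + 1)) :
    ∀ c d : ℕ, j1 ≤ c → c ≤ i → i ≤ d → d ≤ j2 →
      M / Real.sqrt ((d : ℝ) - c + 1) - lam * Cpen j1 j2 c d / ((d : ℝ) - c + 1) ≤
        M / Real.sqrt ((min (i - j1 + 1) (j2 - i + 1) : ℕ) : ℝ)
          + M / Real.sqrt ((j2 : ℝ) - j1 + 1)
          + M ^ 2 / (4 * lam) + lam / ((j2 : ℝ) - j1 + 1) :=
  stmt14_general i j1 j2 M lam hM hlam
end

section
/- Fix i ∈ [n] and construct the set 𝓡_i = {r₀, r₁, r₂, …} ⊆ [i:n] by the dyadic scheme: r₀ = i, and given r_j (a right endpoint of a dyadic interval at level −j of the complete binary tree over [n], with n a power of 2), r_{j+1} is the right endpoint of the parent of the node containing r_j if that node is a left child, and the right endpoint of the right neighbor of the parent otherwise, stopping when r_j = n. Then for every j ≥ 1, 2^j ≤ r_{j+1} − r_j ≤ 2^{j+1}, the sequence is strictly increasing, and the cardinality of 𝓡_i is O(log n). -/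
/-!
`r_{j+1}` is the least multiple of `2^{j+1}` exceeding `r_j`, capped at `n = 2^H`. As `r_j` is
already a multiple of `2^j`, its residue mod `2^{j+1}` is `0` or `2^j`, so the step is `2^{j+1}`
or `2^j`; the cap never bites before `n` is reached, because `n` is a multiple of `2^{j+1}`.
After `H = log₂ n` steps `r_H` is a positive multiple of `n`, hence equal to `n`.
-/

/-- The dyadic right-endpoint sequence `r₀ = i`, `r_{j+1}` = right endpoint of the parent
(if the node of `r_j` at level −j is a left child) or of the right neighbor of the parent
(otherwise); arithmetically `r_{j+1} = 2^{j+1}·(⌊r_j/2^{j+1}⌋ + 1)`, capped at `n`. -/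
def dyadSeq (n i : ℕ) : ℕ → ℕ
  | 0 => i
  | j + 1 => min n (2 ^ (j + 1) * (dyadSeq n i j / 2 ^ (j + 1) + 1))

namespace Nat

theorem mul_div_add_one_eq_add_sub_mod (x : ℕ) {b : ℕ} (hb : 0 < b) :
    b * (x / b + 1) = x + (b - x % b) := by
  have := Nat.div_add_mod x b
  have := Nat.mod_lt x hb
  rw [Nat.mul_add_one]
  omega

theorem le_sub_mod_of_dvd {a b x : ℕ} (hb : 0 < b) (hab : a ∣ b) (hax : a ∣ x) :
    a ≤ b - x % b := by
  have hmod : x % b < b := Nat.mod_lt x hb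
  exact Nat.le_of_dvd (by omega) (Nat.dvd_sub hab ((Nat.dvd_mod_iff hab).2 hax))

theorem mul_div_add_one_le_of_dvd {b x n : ℕ} (hbn : b ∣ n) (hx : x < n) :
    b * (x / b + 1) ≤ n := by
  calc b * (x / b + 1) ≤ b * (n / b) :=
        Nat.mul_le_mul_left b (Nat.div_lt_div_of_lt_of_dvd hbn hx)
    _ = n := Nat.mul_div_cancel' hbn

end Nat

section DyadSeq

variable {n i : ℕ}

theorem dyadSeq_succ (n i j : ℕ) :
    dyadSeq n i (j + 1) = min n (2 ^ (j + 1) * (dyadSeq n i j / 2 ^ (j + 1) + 1)) := rfl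

theorem dyadSeq_le (h : i ≤ n) : ∀ j, dyadSeq n i j ≤ n
  | 0 => h
  | _ + 1 => min_le_left _ _

theorem lt_dyadSeq_succ {j : ℕ} (h : dyadSeq n i j < n) :
    dyadSeq n i j < dyadSeq n i (j + 1) :=
  lt_min h (Nat.lt_mul_div_succ _ (by positivity))

theorem le_dyadSeq (h : i ≤ n) : ∀ j, i ≤ dyadSeq n i j
  | 0 => le_rfl
  | j + 1 => le_min h ((le_dyadSeq h j).trans (Nat.lt_mul_div_succ _ (by positivity)).le)

theorem pow_dvd_dyadSeq_or_eq (n i j : ℕ) :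
    2 ^ j ∣ dyadSeq n i j ∨ dyadSeq n i j = n := by
  cases j with
  | zero => exact Or.inl (one_dvd _)
  | succ j =>
    rw [dyadSeq_succ]
    rcases min_choice n (2 ^ (j + 1) * (dyadSeq n i j / 2 ^ (j + 1) + 1)) with h | h <;>
      rw [h]
    · exact Or.inr rfl
    · exact Or.inl (dvd_mul_right _ _)

theorem pow_dvd_dyadSeq {j : ℕ} (h : dyadSeq n i j < n) : 2 ^ j ∣ dyadSeq n i j :=
  (pow_dvd_dyadSeq_or_eq n i j).resolve_right h.ne

theorem dyadSeq_succ_eq {j : ℕ} (hn : 2 ^ (j + 1) ∣ n) (h : dyadSeq n i j < n) :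
    dyadSeq n i (j + 1) = dyadSeq n i j + (2 ^ (j + 1) - dyadSeq n i j % 2 ^ (j + 1)) := by
  rw [dyadSeq_succ, min_eq_right (Nat.mul_div_add_one_le_of_dvd hn h),
    Nat.mul_div_add_one_eq_add_sub_mod _ (by positivity)]

theorem dyadSeq_step_mem_Icc {H j : ℕ} (hn : n = 2 ^ H) (hi : 1 ≤ i) (hin : i ≤ n)
    (h : dyadSeq n i j < n) :
    dyadSeq n i (j + 1) - dyadSeq n i j ∈ Set.Icc (2 ^ j) (2 ^ (j + 1)) := by
  have hdvd := pow_dvd_dyadSeq h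
  have hjH : j < H := by
    have hpos : 0 < dyadSeq n i j := hi.trans (le_dyadSeq hin j)
    exact (Nat.pow_lt_pow_iff_right (by norm_num)).mp
      (hn ▸ (Nat.le_of_dvd hpos hdvd).trans_lt h)
  have hstep := dyadSeq_succ_eq (hn ▸ pow_dvd_pow 2 hjH) h
  rw [hstep, Nat.add_sub_cancel_left]
  exact ⟨Nat.le_sub_mod_of_dvd (by positivity) (pow_dvd_pow 2 j.le_succ) hdvd, Nat.sub_le _ _⟩

theorem dyadSeq_log_eq {H : ℕ} (hn : n = 2 ^ H) (hi : 1 ≤ i) (hin : i ≤ n) :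
    dyadSeq n i H = n := by
  subst hn
  refine (pow_dvd_dyadSeq_or_eq _ i H).elim (fun hdvd => ?_) id
  have hpos := hi.trans (le_dyadSeq hin H)
  exact (dyadSeq_le hin H).antisymm (Nat.le_of_dvd hpos hdvd)

end DyadSeq

theorem natCast_le_two_mul_log_two_pow_add_one (H : ℕ) :
    (H : ℝ) ≤ 2 * (Real.log ((2 ^ H : ℕ) : ℝ) + 1) := by
  have hlog2 : (1 : ℝ) / 2 < Real.log 2 := by linarith [Real.log_two_gt_d9]
  have hH : (0 : ℝ) ≤ H := H.cast_nonneg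
  rw [Nat.cast_pow, Nat.cast_ofNat, Real.log_pow]
  nlinarith

/-- For n = 2^H and 1 ≤ i ≤ n, the dyadic sequence 𝓡_i = {r₀, r₁, …}
satisfies 2^j ≤ r_{j+1} − r_j ≤ 2^{j+1} for every j ≥ 1 (before reaching n), is strictly
increasing until it reaches n, and its cardinality is O(log n). -/
theorem stmt17 :
    ∃ C : ℝ, 0 < C ∧
      ∀ (H n i : ℕ), n = 2 ^ H → 1 ≤ i → i ≤ n →
        (∀ j : ℕ, 1 ≤ j → dyadSeq n i j < n →
          2 ^ j ≤ dyadSeq n i (j + 1) - dyadSeq n i j ∧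
            dyadSeq n i (j + 1) - dyadSeq n i j ≤ 2 ^ (j + 1)) ∧
        (∀ j : ℕ, dyadSeq n i j < n → dyadSeq n i j < dyadSeq n i (j + 1)) ∧
        (∃ N : ℕ, dyadSeq n i N = n ∧ (N : ℝ) ≤ C * (Real.log n + 1)) := by
  refine ⟨2, two_pos, fun H n i hn hi hin => ⟨fun j _ h => dyadSeq_step_mem_Icc hn hi hin h,
    fun j h => lt_dyadSeq_succ h, H, dyadSeq_log_eq hn hi hin, ?_⟩⟩
  exact hn ▸ natCast_le_two_mul_log_two_pow_add_one H
end
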